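/- Let X be a simplicial set, d ≥ 1, and let N denote the nerve of the one-object groupoid whose morphism group is ZMod d, so that the 1-simplices of N are elements of ZMod d and a 2-simplex is a pair (a₁, a₂) with faces d₀ = a₂, d₁ = a₁ + a₂, d₂ = a₁. Then the map sending a simplicial set morphism r : X ⟶ N to the induced function f : X₁ → ZMod d on 1-simplices is a bijection onto the set of functions f : X₁ → ZMod d satisfying f(d₁σ) = f(d₂σ) + f(d₀σ) for every 2-simplex σ of X. -/

import Mathlib

/-!
An `n`-simplex of the nerve of the one-object category `SingleObj (Multiplicative A)` is a
labelling of the pairs `i ≤ j` of `Fin (n + 1)` by elements of `A` which is additive along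
`i ≤ j ≤ k`. A map `r : X ⟶ N(A)` sends `x ∈ X_n` to the labelling by the values of `r` on the
edges `x|[i,j]` of `x`, so it is determined by its values on `1`-simplices. Conversely, a
`1`-cocycle `f` defines such labellings: restricting `x` to the `2`-simplex `x|[i,j,k]` turns the
cocycle identity into additivity, and the case `i = j = k` gives, after cancellation, label `0`
on degenerate edges, which is what functoriality on identities needs.
-/

open CategoryTheory Simplicial

/-- The label in `ZMod d` carried by a 1-simplex of `X` under a simplicial map from `X`
to the nerve of the one-object groupoid with morphism group `ZMod d`. -/
noncomputable def edgeLabel (d : ℕ) (X : SSet)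
    (r : X ⟶ nerve (SingleObj (Multiplicative (ZMod d)))) (e : X _⦋1⦌) : ZMod d :=
  Multiplicative.toAdd
    ((SingleObj.toEnd (Multiplicative (ZMod d))).symm
      (ComposableArrows.map' (r.app (Opposite.op (SimplexCategory.mk 1)) e) 0 1))

universe u

namespace SSet

variable {X : SSet.{u}} {A : Type u}

def IsOneCocycle [Add A] (f : X _⦋1⦌ → A) : Prop :=
  ∀ σ : X _⦋2⦌, f (X.δ 1 σ) = f (X.δ 2 σ) + f (X.δ 0 σ)

def edgeOfLe {n : ℕ} (x : X _⦋n⦌) {i j : Fin (n + 1)} (h : i ≤ j) : X _⦋1⦌ :=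
  X.map (SimplexCategory.mkOfLe i j h).op x

lemma edgeOfLe_map {m n : ℕ} (θ : ⦋m⦌ ⟶ ⦋n⦌) (x : X _⦋n⦌) {i j : Fin (m + 1)} (h : i ≤ j) :
    edgeOfLe (X.map θ.op x) h = edgeOfLe x (θ.toOrderHom.monotone h) := by
  rw [edgeOfLe, edgeOfLe, ← Functor.map_comp_apply, ← op_comp]
  exact congrArg (fun φ => X.map (Quiver.Hom.op φ) x) (SimplexCategory.Hom.ext_one_left _ _)

lemma edgeOfLe_zero_one (e : X _⦋1⦌) : edgeOfLe e (show (0 : Fin 2) ≤ 1 by decide) = e := by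
  rw [edgeOfLe, SimplexCategory.Hom.ext_one_left (SimplexCategory.mkOfLe _ _ _) (𝟙 _)]
  simp

lemma δ_zero_eq_edgeOfLe (σ : X _⦋2⦌) : X.δ 0 σ = edgeOfLe σ (show (1 : Fin 3) ≤ 2 by decide) :=
  congrArg (fun θ => X.map (Quiver.Hom.op θ) σ) (SimplexCategory.Hom.ext_one_left _ _)

lemma δ_one_eq_edgeOfLe (σ : X _⦋2⦌) : X.δ 1 σ = edgeOfLe σ (show (0 : Fin 3) ≤ 2 by decide) :=
  congrArg (fun θ => X.map (Quiver.Hom.op θ) σ) (SimplexCategory.Hom.ext_one_left _ _)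

lemma δ_two_eq_edgeOfLe (σ : X _⦋2⦌) : X.δ 2 σ = edgeOfLe σ (show (0 : Fin 3) ≤ 1 by decide) :=
  congrArg (fun θ => X.map (Quiver.Hom.op θ) σ) (SimplexCategory.Hom.ext_one_left _ _)

lemma isOneCocycle_iff [Add A] {f : X _⦋1⦌ → A} :
    IsOneCocycle f ↔ ∀ {n : ℕ} (x : X _⦋n⦌) {i j k : Fin (n + 1)} (hij : i ≤ j) (hjk : j ≤ k),
      f (edgeOfLe x (hij.trans hjk)) = f (edgeOfLe x hij) + f (edgeOfLe x hjk) := by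
  refine ⟨fun hf n x i j k hij hjk => ?_, fun hf σ => ?_⟩
  · have h := hf (X.map (SimplexCategory.mkOfLeComp i j k hij hjk).op x)
    rwa [δ_zero_eq_edgeOfLe, δ_one_eq_edgeOfLe, δ_two_eq_edgeOfLe, edgeOfLe_map, edgeOfLe_map,
      edgeOfLe_map] at h
  · rw [δ_zero_eq_edgeOfLe, δ_one_eq_edgeOfLe, δ_two_eq_edgeOfLe]
    exact hf σ _ _

section AddMonoid

variable [AddMonoid A]

def nerveLabel (r : X ⟶ nerve (SingleObj (Multiplicative A))) (e : X _⦋1⦌) : A :=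
  Multiplicative.toAdd ((r.app _ e).map' 0 1)

lemma ofAdd_nerveLabel_edgeOfLe (r : X ⟶ nerve (SingleObj (Multiplicative A))) {n : ℕ}
    (x : X _⦋n⦌) {i j : Fin (n + 1)} (h : i ≤ j) :
    Multiplicative.ofAdd (nerveLabel r (edgeOfLe x h)) = (r.app _ x).map (homOfLE h) := by
  rw [nerveLabel, edgeOfLe, NatTrans.naturality_apply]
  rfl

end AddMonoid

section AddCommMonoid

variable [AddCommMonoid A]

lemma nerveLabel_isOneCocycle (r : X ⟶ nerve (SingleObj (Multiplicative A))) :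
    IsOneCocycle (nerveLabel r) :=
  isOneCocycle_iff.mpr fun x _ _ _ hij hjk => by
    apply Multiplicative.ofAdd.injective
    rw [ofAdd_add, ofAdd_nerveLabel_edgeOfLe, ofAdd_nerveLabel_edgeOfLe, ofAdd_nerveLabel_edgeOfLe,
      mul_comm, ← SingleObj.comp_as_mul]
    exact (r.app _ x).map_comp (homOfLE hij) (homOfLE hjk)

end AddCommMonoid

variable [AddCancelCommMonoid A] {f : X _⦋1⦌ → A}

lemma IsOneCocycle.apply_edgeOfLe_refl (hf : IsOneCocycle f) {n : ℕ} (x : X _⦋n⦌)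
    (i : Fin (n + 1)) : f (edgeOfLe x (le_refl i)) = 0 :=
  left_eq_add.mp (isOneCocycle_iff.mp hf x le_rfl le_rfl)

def IsOneCocycle.nerveSimplex (hf : IsOneCocycle f) {n : ℕ} (x : X _⦋n⦌) :
    ComposableArrows (SingleObj (Multiplicative A)) n where
  obj _ := SingleObj.star _
  map g := Multiplicative.ofAdd (f (edgeOfLe x (leOfHom g)))
  map_id i := congrArg Multiplicative.ofAdd (hf.apply_edgeOfLe_refl x i)
  map_comp g h := by
    rw [SingleObj.comp_as_mul, ← ofAdd_add, add_comm (f _)]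
    exact congrArg Multiplicative.ofAdd (isOneCocycle_iff.mp hf x (leOfHom g) (leOfHom h))

def IsOneCocycle.toNerve (hf : IsOneCocycle f) : X ⟶ nerve (SingleObj (Multiplicative A)) where
  app _ := TypeCat.ofHom hf.nerveSimplex
  naturality _ _ θ := by
    ext x
    refine CategoryTheory.Functor.ext (fun _ => rfl) (fun i j g => ?_)
    simp only [eqToHom_refl, Category.comp_id, Category.id_comp]
    exact congrArg (Multiplicative.ofAdd ∘ f) (edgeOfLe_map θ.unop x (leOfHom g))

lemma nerveLabel_toNerve (hf : IsOneCocycle f) : nerveLabel hf.toNerve = f :=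
  funext fun e => congrArg f (edgeOfLe_zero_one e)

lemma toNerve_nerveLabel (r : X ⟶ nerve (SingleObj (Multiplicative A))) :
    (nerveLabel_isOneCocycle r).toNerve = r := by
  ext Δ x
  refine CategoryTheory.Functor.ext (fun _ => rfl) (fun i j g => ?_)
  simp only [eqToHom_refl, Category.comp_id, Category.id_comp]
  exact ofAdd_nerveLabel_edgeOfLe r x (leOfHom g)

def homNerveEquivOneCocycles :
    (X ⟶ nerve (SingleObj (Multiplicative A))) ≃ {f : X _⦋1⦌ → A // IsOneCocycle f} where
  toFun r := ⟨nerveLabel r, nerveLabel_isOneCocycle r⟩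
  invFun f := f.2.toNerve
  left_inv := toNerve_nerveLabel
  right_inv f := Subtype.ext (nerveLabel_toNerve f.2)

end SSet

theorem maps_to_nerve_equiv_cocycles (d : ℕ) (X : SSet) :
    Function.Injective
      (fun r : X ⟶ nerve (SingleObj (Multiplicative (ZMod d))) => edgeLabel d X r) ∧
    Set.range
      (fun r : X ⟶ nerve (SingleObj (Multiplicative (ZMod d))) => edgeLabel d X r) =
      ({f |
        ∀ σ : X _⦋2⦌, f (X.δ 1 σ) = f (X.δ 2 σ) + f (X.δ 0 σ)} : Set (X _⦋1⦌ → ZMod d)) :=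
  -- `edgeLabel d X` is `SSet.nerveLabel` for `A = ZMod d`, as `SingleObj.toEnd` is the identity.
  ⟨Subtype.val_injective.comp SSet.homNerveEquivOneCocycles.injective,
    (SSet.homNerveEquivOneCocycles.surjective.range_comp Subtype.val).trans
      Subtype.range_coe_subtype⟩
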